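/- Let d ≥ 1, M ∈ ℕ, δ ∈ (0,1), and for t = 1, …, M let α_t, α'_t, β_t, β'_t, γ_t, γ'_t, a : ℤ^d → ℂ satisfy ‖α_t‖_{ℓ²}, ‖α'_t‖_{ℓ²}, ‖β_t‖_{ℓ²}, ‖β'_t‖_{ℓ²}, ‖a‖_{ℓ²} < ∞, ‖γ_t‖_{ℓ⁴}, ‖γ'_t‖_{ℓ⁴} < ∞, together with ‖α_t − α'_t‖_{ℓ²} < δ, ‖β_t − β'_t‖_{ℓ²} < δ, ‖γ_t − γ'_t‖_{ℓ⁴} < δ. Set A_t := ‖γ_t‖_{ℓ⁴}(1 + ‖α_t‖_{ℓ²} + ‖β_t‖_{ℓ²}), B_t := (1 + ‖α_t‖_{ℓ²})(1 + ‖β_t‖_{ℓ²})(1 + ‖γ_t‖_{ℓ⁴}), and c := max_{1 ≤ t ≤ M} (A_t + B_t). Then ‖ Σ_{t=1}^{M} [ γ_t·((α_t·a)*(β_t·a)) − γ'_t·((α'_t·a)*(β'_t·a)) ] ‖_{ℓ²} ≤ M δ c ‖a‖_{ℓ²}². -/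

import Mathlib

open scoped BigOperators

/-- The `ℓ²` norm of a function on `ℤ^d` (defined via `tsum`). -/
noncomputable def l2Norm {d : ℕ} (f : (Fin d → ℤ) → ℂ) : ℝ :=
  Real.sqrt (∑' k : Fin d → ℤ, ‖f k‖ ^ 2)

/-- The `ℓ⁴` norm of a function on `ℤ^d` (defined via `tsum`). -/
noncomputable def l4Norm {d : ℕ} (f : (Fin d → ℤ) → ℂ) : ℝ :=
  (∑' k : Fin d → ℤ, ‖f k‖ ^ 4) ^ ((1 : ℝ) / 4)

/-- Discrete convolution on `ℤ^d`: `(f * g)_k = Σ_l f_l g_{k−l}`. -/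
noncomputable def zConv {d : ℕ} (f g : (Fin d → ℤ) → ℂ) : (Fin d → ℤ) → ℂ :=
  fun k => ∑' l : Fin d → ℤ, f l * g (k - l)

/-!
For a single term, Hölder's inequality and `ℓ² ⊆ ℓ⁴` give `‖γ·(u*v)‖₂ ≤ ‖γ‖₄ ‖u*v‖₂`, Young's
inequality gives `‖u*v‖₂ ≤ ‖u‖₁ ‖v‖₂`, and for `u = α·a`, `v = β·a` Cauchy–Schwarz and
`‖a‖_∞ ≤ ‖a‖₂` give `‖u‖₁ ≤ ‖α‖₂ ‖a‖₂` and `‖v‖₂ ≤ ‖β‖₂ ‖a‖₂`. So `γ·((α·a)*(β·a))` has norm at most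
`‖γ‖₄ ‖α‖₂ ‖β‖₂ ‖a‖₂²`, and since it is trilinear in `(γ, α, β)`, the difference of the operators at
the two parameter sets splits into three such terms, each carrying one parameter difference of
norm `< δ`. The remaining factors are controlled by `‖α'‖₂ ≤ ‖α‖₂ + 1` and `‖γ'‖₄ ≤ ‖γ‖₄ + 1`, and
summing over `t` gives the factor `M`.
-/

open MeasureTheory
open scoped ENNReal

namespace ENNReal

variable {ι : Type*}

theorem rpow_inv_two_sq (x : ℝ≥0∞) : (x ^ (2⁻¹ : ℝ)) ^ 2 = x := by
  simpa using rpow_inv_natCast_pow two_ne_zero x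

theorem tsum_mul_sq_le_sq_mul_sq (f g : ι → ℝ≥0∞) :
    (∑' i, f i * g i) ^ 2 ≤ (∑' i, f i ^ 2) * ∑' i, g i ^ 2 := by
  -- A `tsum` in `ℝ≥0∞` is the `lintegral` against the counting measure on the discrete
  -- σ-algebra, so Hölder's inequality for `lintegral` applies.
  let _ : MeasurableSpace ι := ⊤
  have h := lintegral_mul_le_Lp_mul_Lq (Measure.count : Measure ι)
    Real.HolderConjugate.two_two .of_discrete .of_discrete (f := f) (g := g)
  simp only [lintegral_count, Pi.mul_apply, rpow_ofNat, one_div] at h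
  simpa only [mul_pow, rpow_inv_two_sq] using pow_le_pow_left' h 2

theorem tsum_mul_sq_le_tsum_mul_tsum_mul_sq (w f : ι → ℝ≥0∞) :
    (∑' i, w i * f i) ^ 2 ≤ (∑' i, w i) * ∑' i, w i * f i ^ 2 := by
  have hw (i : ι) : w i * f i = w i ^ (2⁻¹ : ℝ) * (w i ^ (2⁻¹ : ℝ) * f i) := by
    rw [← mul_assoc, ← sq, rpow_inv_two_sq]
  simpa only [← hw, mul_pow, rpow_inv_two_sq] using
    tsum_mul_sq_le_sq_mul_sq (fun i => w i ^ (2⁻¹ : ℝ)) (fun i => w i ^ (2⁻¹ : ℝ) * f i)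

theorem tsum_sq_le_sq_tsum (f : ι → ℝ≥0∞) : ∑' i, f i ^ 2 ≤ (∑' i, f i) ^ 2 := by
  calc ∑' i, f i ^ 2 = ∑' i, f i * f i := by simp only [sq]
    _ ≤ ∑' i, f i * ∑' j, f j := ENNReal.tsum_le_tsum fun i => by gcongr; exact ENNReal.le_tsum i
    _ = (∑' i, f i) ^ 2 := by rw [ENNReal.tsum_mul_right, sq]

end ENNReal

section Count

variable {ι E 𝕜 : Type*} [MeasurableSpace ι] [MeasurableSingletonClass ι]
  [NormedAddCommGroup E] [NormedField 𝕜]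

theorem eLpNorm_count_pow (f : ι → E) {p : ℕ} (hp : p ≠ 0) :
    eLpNorm f p .count ^ p = ∑' i, ‖f i‖ₑ ^ p := by
  have := eLpNorm_nnreal_pow_eq_lintegral (f := f) (μ := .count) (p := p) (by exact_mod_cast hp)
  simpa [lintegral_count, ENNReal.rpow_natCast] using this

theorem eLpNorm_two_count_sq (f : ι → E) : eLpNorm f 2 .count ^ 2 = ∑' i, ‖f i‖ₑ ^ 2 := by
  simpa using eLpNorm_count_pow f two_ne_zero

theorem eLpNorm_one_count (f : ι → E) : eLpNorm f 1 .count = ∑' i, ‖f i‖ₑ := by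
  rw [eLpNorm_one_eq_lintegral_enorm, lintegral_count]

theorem eLpNorm_top_count_le (f : ι → E) {p : ℝ≥0∞} (hp : p ≠ 0) :
    eLpNorm f ∞ .count ≤ eLpNorm f p .count := by
  simpa using fun i => enorm_le_eLpNorm_count f i hp

theorem eLpNorm_four_count_le_two (f : ι → E) : eLpNorm f 4 .count ≤ eLpNorm f 2 .count := by
  rw [← ENNReal.pow_le_pow_left_iff (n := 4) (by norm_num)]
  have h4 := eLpNorm_count_pow f (p := 4) (by norm_num)
  push_cast at h4
  calc eLpNorm f 4 .count ^ 4 = ∑' i, (‖f i‖ₑ ^ 2) ^ 2 := by simp only [h4, ← pow_mul]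
    _ ≤ (∑' i, ‖f i‖ₑ ^ 2) ^ 2 := ENNReal.tsum_sq_le_sq_tsum _
    _ = eLpNorm f 2 .count ^ 4 := by rw [← eLpNorm_two_count_sq, ← pow_mul]

variable [Countable ι]

theorem eLpNorm_two_count_mul_le (f g : ι → 𝕜) :
    eLpNorm (f * g) 2 .count ≤ eLpNorm f 2 .count * eLpNorm g 2 .count :=
  (eLpNorm_smul_le_eLpNorm_mul_eLpNorm_top (φ := f) 2 g .of_discrete).trans <| by
    gcongr; exact eLpNorm_top_count_le g two_ne_zero

theorem memLp_two_count_mul {f g : ι → 𝕜} (hf : MemLp f 2 .count)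
    (hg : MemLp g 2 .count) : MemLp (f * g) 2 .count :=
  ⟨.of_discrete, (eLpNorm_two_count_mul_le f g).trans_lt
    (ENNReal.mul_lt_top hf.eLpNorm_lt_top hg.eLpNorm_lt_top)⟩

theorem memLp_count_iff_summable {p : ℕ} (hp : p ≠ 0) (f : ι → E) :
    MemLp f p .count ↔ Summable fun i => ‖f i‖ ^ p := by
  have hpow : ∑' i, ‖f i‖ₑ ^ p = ∑' i, ‖‖f i‖ ^ p‖ₑ := by simp [enorm_pow]
  rw [MemLp, and_iff_right .of_discrete, lt_top_iff_ne_top,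
    ← (ENNReal.pow_ne_top_iff (n := p)).trans (or_iff_left hp), eLpNorm_count_pow f hp, hpow,
    tsum_enorm_ne_top_iff_summable_norm]
  simp

theorem lpNorm_count_eq_tsum {p : ℕ} (hp : p ≠ 0) (f : ι → E) :
    lpNorm f p .count = (∑' i, ‖f i‖ ^ p) ^ (1 / p : ℝ) := by
  have := eLpNorm_nnreal_eq_lintegral (f := f) (μ := .count) (p := p) (by exact_mod_cast hp)
  simp only [ENNReal.coe_natCast, NNReal.coe_natCast, lintegral_count, ENNReal.rpow_natCast] at this
  rw [← toReal_eLpNorm .of_discrete, this, ← ENNReal.toReal_rpow, ENNReal.tsum_toReal_eq (by simp)]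
  simp

end Count

section Lattice

variable {d : ℕ}

-- No summability hypothesis is needed: outside `ℓ²` both sides take the junk value `0`.
theorem l2Norm_eq_lpNorm (f : (Fin d → ℤ) → ℂ) : l2Norm f = lpNorm f 2 .count := by
  simpa [l2Norm, Real.sqrt_eq_rpow] using (lpNorm_count_eq_tsum two_ne_zero f).symm

theorem l4Norm_eq_lpNorm (f : (Fin d → ℤ) → ℂ) : l4Norm f = lpNorm f 4 .count := by
  simpa [l4Norm] using (lpNorm_count_eq_tsum (p := 4) (by norm_num) f).symm

theorem eLpNorm_zConv_le (u v : (Fin d → ℤ) → ℂ) :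
    eLpNorm (zConv u v) 2 .count ≤ eLpNorm u 1 .count * eLpNorm v 2 .count := by
  rw [← ENNReal.pow_le_pow_left_iff two_ne_zero, mul_pow, eLpNorm_two_count_sq,
    eLpNorm_two_count_sq, eLpNorm_one_count]
  have translate (l : Fin d → ℤ) : ∑' k, ‖v (k - l)‖ₑ ^ 2 = ∑' k, ‖v k‖ₑ ^ 2 :=
    (Equiv.subRight l).tsum_eq (fun k => ‖v k‖ₑ ^ 2)
  calc ∑' k, ‖zConv u v k‖ₑ ^ 2 ≤ ∑' k, (∑' l, ‖u l‖ₑ * ‖v (k - l)‖ₑ) ^ 2 := by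
        gcongr with k
        simpa only [zConv, enorm_mul] using enorm_tsum_le_tsum_enorm (f := fun l => u l * v (k - l))
    _ ≤ ∑' k, (∑' l, ‖u l‖ₑ) * ∑' l, ‖u l‖ₑ * ‖v (k - l)‖ₑ ^ 2 := by
        gcongr with k
        exact ENNReal.tsum_mul_sq_le_tsum_mul_tsum_mul_sq _ _
    _ = (∑' l, ‖u l‖ₑ) ^ 2 * ∑' k, ‖v k‖ₑ ^ 2 := by
        simp_rw [ENNReal.tsum_mul_left]
        rw [ENNReal.tsum_comm]
        simp_rw [ENNReal.tsum_mul_left, translate, ENNReal.tsum_mul_right]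
        ring

theorem summable_zConv {u v : (Fin d → ℤ) → ℂ} (hu : MemLp u 2 .count) (hv : MemLp v 2 .count)
    (k : Fin d → ℤ) : Summable fun l => u l * v (k - l) := by
  refine .of_norm (tsum_enorm_ne_top_iff_summable_norm.mp ?_)
  have translate : ∑' l, ‖v (k - l)‖ₑ ^ 2 = ∑' l, ‖v l‖ₑ ^ 2 :=
    (Equiv.subLeft k).tsum_eq (fun l => ‖v l‖ₑ ^ 2)
  have hcs := ENNReal.tsum_mul_sq_le_sq_mul_sq (‖u ·‖ₑ) (fun l => ‖v (k - l)‖ₑ)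
  rw [translate, ← eLpNorm_two_count_sq, ← eLpNorm_two_count_sq, ← mul_pow] at hcs
  have hfinite : (eLpNorm u 2 .count * eLpNorm v 2 .count) ^ 2 < ∞ := by
    have := hu.eLpNorm_lt_top; have := hv.eLpNorm_lt_top; finiteness
  simpa [enorm_mul] using (hcs.trans_lt hfinite).ne

theorem zConv_sub_zConv {u u' v v' : (Fin d → ℤ) → ℂ} (hu : MemLp u 2 .count)
    (hu' : MemLp u' 2 .count) (hv : MemLp v 2 .count) (hv' : MemLp v' 2 .count) :
    zConv u v - zConv u' v' = zConv (u - u') v + zConv u' (v - v') := by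
  ext k
  rw [Pi.sub_apply, Pi.add_apply]
  unfold zConv
  rw [← (summable_zConv hu hv k).tsum_sub (summable_zConv hu' hv' k),
    ← (summable_zConv (hu.sub hu') hv k).tsum_add (summable_zConv hu' (hv.sub hv') k)]
  exact tsum_congr fun l => by simp only [Pi.sub_apply]; ring

noncomputable def bilinSpectralOp (γ α β a : (Fin d → ℤ) → ℂ) : (Fin d → ℤ) → ℂ :=
  γ * zConv (α * a) (β * a)

theorem eLpNorm_bilinSpectralOp_le (γ α β a : (Fin d → ℤ) → ℂ) :
    eLpNorm (bilinSpectralOp γ α β a) 2 .count ≤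
      eLpNorm γ 4 .count * eLpNorm α 2 .count * eLpNorm β 2 .count * eLpNorm a 2 .count ^ 2 := by
  have : ENNReal.HolderTriple 4 4 2 := ⟨by
    rw [← two_mul, show (4 : ℝ≥0∞) = 2 * 2 by norm_num, ENNReal.mul_inv (by simp) (by simp),
      ← mul_assoc, ENNReal.mul_inv_cancel (by simp) (by simp), one_mul]⟩
  calc eLpNorm (bilinSpectralOp γ α β a) 2 .count
      ≤ eLpNorm γ 4 .count * eLpNorm (zConv (α * a) (β * a)) 4 .count :=
        eLpNorm_smul_le_mul_eLpNorm (φ := γ) .of_discrete .of_discrete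
    _ ≤ eLpNorm γ 4 .count * (eLpNorm (α * a) 1 .count * eLpNorm (β * a) 2 .count) := by
        gcongr
        exact (eLpNorm_four_count_le_two _).trans (eLpNorm_zConv_le _ _)
    _ ≤ eLpNorm γ 4 .count * (eLpNorm α 2 .count * eLpNorm a 2 .count *
          (eLpNorm β 2 .count * eLpNorm a 2 .count)) := by
        gcongr
        · exact eLpNorm_smul_le_mul_eLpNorm (φ := α) (f := a) .of_discrete .of_discrete
        · exact eLpNorm_two_count_mul_le β a
    _ = _ := by ring

theorem memLp_bilinSpectralOp {γ α β a : (Fin d → ℤ) → ℂ} (hγ : MemLp γ 4 .count)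
    (hα : MemLp α 2 .count) (hβ : MemLp β 2 .count) (ha : MemLp a 2 .count) :
    MemLp (bilinSpectralOp γ α β a) 2 .count :=
  ⟨.of_discrete, (eLpNorm_bilinSpectralOp_le γ α β a).trans_lt <| by
    have := hγ.eLpNorm_lt_top; have := hα.eLpNorm_lt_top
    have := hβ.eLpNorm_lt_top; have := ha.eLpNorm_lt_top
    finiteness⟩

theorem lpNorm_bilinSpectralOp_le {γ α β a : (Fin d → ℤ) → ℂ} (hγ : MemLp γ 4 .count)
    (hα : MemLp α 2 .count) (hβ : MemLp β 2 .count) (ha : MemLp a 2 .count) :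
    lpNorm (bilinSpectralOp γ α β a) 2 .count ≤
      lpNorm γ 4 .count * lpNorm α 2 .count * lpNorm β 2 .count * lpNorm a 2 .count ^ 2 := by
  simp only [← toReal_eLpNorm .of_discrete, ← ENNReal.toReal_mul, ← ENNReal.toReal_pow]
  refine ENNReal.toReal_mono ?_ (eLpNorm_bilinSpectralOp_le γ α β a)
  have := hγ.eLpNorm_lt_top; have := hα.eLpNorm_lt_top
  have := hβ.eLpNorm_lt_top; have := ha.eLpNorm_lt_top
  finiteness

theorem bilinSpectralOp_sub_bilinSpectralOp {γ γ' α α' β β' a : (Fin d → ℤ) → ℂ}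
    (hα : MemLp α 2 .count) (hα' : MemLp α' 2 .count) (hβ : MemLp β 2 .count)
    (hβ' : MemLp β' 2 .count) (ha : MemLp a 2 .count) :
    bilinSpectralOp γ α β a - bilinSpectralOp γ' α' β' a =
      bilinSpectralOp (γ - γ') α β a + bilinSpectralOp γ' (α - α') β a
        + bilinSpectralOp γ' α' (β - β') a := by
  have hconv := zConv_sub_zConv (memLp_two_count_mul hα ha) (memLp_two_count_mul hα' ha)
    (memLp_two_count_mul hβ ha) (memLp_two_count_mul hβ' ha)
  simp only [bilinSpectralOp, sub_mul]
  rw [add_assoc, ← mul_add, ← hconv]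
  ring

theorem perturbation_coeff_le {pα pβ pγ qα qγ dα dβ dγ δ : ℝ} (hpα : 0 ≤ pα) (hpβ : 0 ≤ pβ)
    (hpγ : 0 ≤ pγ) (hqα : 0 ≤ qα) (hdα : 0 ≤ dα) (hdβ : 0 ≤ dβ)
    (hdαδ : dα ≤ δ) (hdβδ : dβ ≤ δ) (hdγδ : dγ ≤ δ)
    (hqαpα : qα ≤ pα + 1) (hqγpγ : qγ ≤ pγ + 1) :
    dγ * pα * pβ + qγ * dα * pβ + qγ * qα * dβ
      ≤ δ * (pγ * (1 + pα + pβ) + (1 + pα) * (1 + pβ) * (1 + pγ)) := by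
  have hδ : 0 ≤ δ := hdα.trans hdαδ
  have hslack : 0 ≤ δ * ((1 + pα) * (1 + pβ) * pγ) := by positivity
  calc dγ * pα * pβ + qγ * dα * pβ + qγ * qα * dβ
      ≤ δ * pα * pβ + (pγ + 1) * δ * pβ + (pγ + 1) * (pα + 1) * δ := by gcongr
    _ ≤ _ := by linear_combination hslack

theorem lpNorm_bilinSpectralOp_sub_le {γ γ' α α' β β' a : (Fin d → ℤ) → ℂ} {δ : ℝ}
    (hγ : MemLp γ 4 .count) (hγ' : MemLp γ' 4 .count) (hα : MemLp α 2 .count)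
    (hα' : MemLp α' 2 .count) (hβ : MemLp β 2 .count) (hβ' : MemLp β' 2 .count)
    (ha : MemLp a 2 .count) (hδ : δ ≤ 1)
    (hγδ : lpNorm (γ - γ') 4 .count ≤ δ) (hαδ : lpNorm (α - α') 2 .count ≤ δ)
    (hβδ : lpNorm (β - β') 2 .count ≤ δ) :
    lpNorm (bilinSpectralOp γ α β a - bilinSpectralOp γ' α' β' a) 2 .count ≤
      δ * (lpNorm γ 4 .count * (1 + lpNorm α 2 .count + lpNorm β 2 .count)
        + (1 + lpNorm α 2 .count) * (1 + lpNorm β 2 .count) * (1 + lpNorm γ 4 .count))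
        * lpNorm a 2 .count ^ 2 := by
  have hB₁ := memLp_bilinSpectralOp (hγ.sub hγ') hα hβ ha
  have hB₂ := memLp_bilinSpectralOp hγ' (hα.sub hα') hβ ha
  have hα'_le : lpNorm α' 2 .count ≤ lpNorm α 2 .count + 1 :=
    (lpNorm_le_lpNorm_add_lpNorm_sub hα one_le_two).trans (by linarith)
  have hγ'_le : lpNorm γ' 4 .count ≤ lpNorm γ 4 .count + 1 :=
    (lpNorm_le_lpNorm_add_lpNorm_sub hγ (by norm_num)).trans (by linarith)
  have hcoeff := perturbation_coeff_le (pβ := lpNorm β 2 .count) lpNorm_nonneg lpNorm_nonneg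
    lpNorm_nonneg lpNorm_nonneg lpNorm_nonneg lpNorm_nonneg hαδ hβδ hγδ hα'_le hγ'_le
  rw [bilinSpectralOp_sub_bilinSpectralOp hα hα' hβ hβ' ha]
  calc _ ≤ lpNorm (bilinSpectralOp (γ - γ') α β a) 2 .count
          + lpNorm (bilinSpectralOp γ' (α - α') β a) 2 .count
          + lpNorm (bilinSpectralOp γ' α' (β - β') a) 2 .count :=
        (lpNorm_add_le (hB₁.add hB₂) one_le_two).trans <| by
          gcongr; exact lpNorm_add_le hB₁ one_le_two
    _ ≤ _ := by
        grw [lpNorm_bilinSpectralOp_le (hγ.sub hγ') hα hβ ha,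
          lpNorm_bilinSpectralOp_le hγ' (hα.sub hα') hβ ha,
          lpNorm_bilinSpectralOp_le hγ' hα' (hβ.sub hβ') ha]
        linarith [mul_le_mul_of_nonneg_right hcoeff (sq_nonneg (lpNorm a 2 .count))]

end Lattice

theorem statement7_general (d M : ℕ) (δ : ℝ) (hδ0 : 0 < δ) (hδ1 : δ < 1)
    (α α' β β' γ γ' : Fin M → (Fin d → ℤ) → ℂ) (a : (Fin d → ℤ) → ℂ)
    (hα : ∀ t, Summable fun k => ‖α t k‖ ^ 2)
    (hα' : ∀ t, Summable fun k => ‖α' t k‖ ^ 2)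
    (hβ : ∀ t, Summable fun k => ‖β t k‖ ^ 2)
    (hβ' : ∀ t, Summable fun k => ‖β' t k‖ ^ 2)
    (ha : Summable fun k => ‖a k‖ ^ 2)
    (hγ : ∀ t, Summable fun k => ‖γ t k‖ ^ 4)
    (hγ' : ∀ t, Summable fun k => ‖γ' t k‖ ^ 4)
    (hαδ : ∀ t, l2Norm (fun n => α t n - α' t n) < δ)
    (hβδ : ∀ t, l2Norm (fun n => β t n - β' t n) < δ)
    (hγδ : ∀ t, l4Norm (fun n => γ t n - γ' t n) < δ)
    (c : ℝ)
    (hc : c = ⨆ t : Fin M,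
      (l4Norm (γ t) * (1 + l2Norm (α t) + l2Norm (β t))
        + (1 + l2Norm (α t)) * (1 + l2Norm (β t)) * (1 + l4Norm (γ t)))) :
    l2Norm (fun k => ∑ t : Fin M,
        (γ t k * zConv (fun n => α t n * a n) (fun n => β t n * a n) k
          - γ' t k * zConv (fun n => α' t n * a n) (fun n => β' t n * a n) k))
      ≤ M * δ * c * (l2Norm a) ^ 2 := by
  have mem₂ {f : (Fin d → ℤ) → ℂ} (hf : Summable fun k => ‖f k‖ ^ 2) : MemLp f 2 .count := by
    simpa using (memLp_count_iff_summable two_ne_zero f).2 hf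
  have mem₄ {f : (Fin d → ℤ) → ℂ} (hf : Summable fun k => ‖f k‖ ^ 4) : MemLp f 4 .count := by
    simpa using (memLp_count_iff_summable (p := 4) (by norm_num) f).2 hf
  set D : Fin M → (Fin d → ℤ) → ℂ := fun t =>
    bilinSpectralOp (γ t) (α t) (β t) a - bilinSpectralOp (γ' t) (α' t) (β' t) a
  have hD (t : Fin M) : lpNorm (D t) 2 .count ≤ δ * c * lpNorm a 2 .count ^ 2 := by
    simp only [l2Norm_eq_lpNorm, l4Norm_eq_lpNorm] at hαδ hβδ hγδ hc
    refine (lpNorm_bilinSpectralOp_sub_le (mem₄ (hγ t)) (mem₄ (hγ' t)) (mem₂ (hα t))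
      (mem₂ (hα' t)) (mem₂ (hβ t)) (mem₂ (hβ' t)) (mem₂ ha) hδ1.le (hγδ t).le (hαδ t).le
      (hβδ t).le).trans ?_
    gcongr
    rw [hc]
    exact le_ciSup_of_le (Finite.bddAbove_range _) t le_rfl
  calc l2Norm (fun k => ∑ t, D t k) = lpNorm (∑ t, D t) 2 .count := by
        rw [l2Norm_eq_lpNorm]; congr 1; ext k; exact (Finset.sum_apply k _ _).symm
    _ ≤ ∑ t, lpNorm (D t) 2 .count := lpNorm_sum_le (fun t _ =>
        (memLp_bilinSpectralOp (mem₄ (hγ t)) (mem₂ (hα t)) (mem₂ (hβ t)) (mem₂ ha)).sub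
          (memLp_bilinSpectralOp (mem₄ (hγ' t)) (mem₂ (hα' t)) (mem₂ (hβ' t)) (mem₂ ha)))
        one_le_two
    _ ≤ ∑ t : Fin M, δ * c * lpNorm a 2 .count ^ 2 := Finset.sum_le_sum fun t _ => hD t
    _ = M * δ * c * l2Norm a ^ 2 := by
        rw [Finset.sum_const, Finset.card_univ, Fintype.card_fin, nsmul_eq_mul, l2Norm_eq_lpNorm]
        ring

/-- (Lemma 3.3 of the paper, sequence form.) With
`A_t := ‖γ_t‖_{ℓ⁴}(1 + ‖α_t‖_{ℓ²} + ‖β_t‖_{ℓ²})`,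
`B_t := (1 + ‖α_t‖_{ℓ²})(1 + ‖β_t‖_{ℓ²})(1 + ‖γ_t‖_{ℓ⁴})` and
`c := max_{1 ≤ t ≤ M} (A_t + B_t)`, if all perturbed parameters are `δ`-close
(`δ ∈ (0,1)`), then
`‖Σ_t [γ_t·((α_t·a)*(β_t·a)) − γ'_t·((α'_t·a)*(β'_t·a))]‖_{ℓ²} ≤ M δ c ‖a‖_{ℓ²}²`. -/
theorem statement7 (d M : ℕ) (hd : 1 ≤ d) (hM : 0 < M)
    (δ : ℝ) (hδ0 : 0 < δ) (hδ1 : δ < 1)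
    (α α' β β' γ γ' : Fin M → (Fin d → ℤ) → ℂ) (a : (Fin d → ℤ) → ℂ)
    (hα : ∀ t, Summable fun k => ‖α t k‖ ^ 2)
    (hα' : ∀ t, Summable fun k => ‖α' t k‖ ^ 2)
    (hβ : ∀ t, Summable fun k => ‖β t k‖ ^ 2)
    (hβ' : ∀ t, Summable fun k => ‖β' t k‖ ^ 2)
    (ha : Summable fun k => ‖a k‖ ^ 2)
    (hγ : ∀ t, Summable fun k => ‖γ t k‖ ^ 4)
    (hγ' : ∀ t, Summable fun k => ‖γ' t k‖ ^ 4)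
    (hαδ : ∀ t, l2Norm (fun n => α t n - α' t n) < δ)
    (hβδ : ∀ t, l2Norm (fun n => β t n - β' t n) < δ)
    (hγδ : ∀ t, l4Norm (fun n => γ t n - γ' t n) < δ)
    (c : ℝ)
    (hc : c = ⨆ t : Fin M,
      (l4Norm (γ t) * (1 + l2Norm (α t) + l2Norm (β t))
        + (1 + l2Norm (α t)) * (1 + l2Norm (β t)) * (1 + l4Norm (γ t)))) :
    l2Norm (fun k => ∑ t : Fin M,
        (γ t k * zConv (fun n => α t n * a n) (fun n => β t n * a n) k
          - γ' t k * zConv (fun n => α' t n * a n) (fun n => β' t n * a n) k))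
      ≤ M * δ * c * (l2Norm a) ^ 2 :=
  statement7_general d M δ hδ0 hδ1 α α' β β' γ γ' a hα hα' hβ hβ' ha hγ hγ' hαδ hβδ hγδ c hc
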